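/- arXiv:2009.04269 — 7 statements merged into one kernel-verified Lean document; each statement's English description precedes it below -/
import Mathlib

section
/- For every n ≥ 1 and every permutation π ∈ S_n avoiding both 213 and 231, iar(π) = comp(π), where iar(π) is the length of the initial ascending run of π and comp(π) is the number of components of π. -/
open Finset
open scoped Classical

/-- Number of components of a permutation of `Fin n` (0-based version of
`|{i ∈ [n] : π(j) ≤ i for all j ≤ i}|`). -/
def comps {n : ℕ} (π : Equiv.Perm (Fin n)) : ℕ :=
  (Finset.univ.filter fun i : Fin n => ∀ j, j ≤ i → π j ≤ i).card

/-- Number of descents. -/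
def des {n : ℕ} (π : Equiv.Perm (Fin n)) : ℕ :=
  (Finset.univ.filter fun i : Fin n =>
    ∃ h : (i : ℕ) + 1 < n, π ⟨(i : ℕ) + 1, h⟩ < π i).card

/-- Length of the initial ascending run: `min(DES(π) ∪ {n})` with 1-based descent positions. -/
noncomputable def iar {n : ℕ} (π : Equiv.Perm (Fin n)) : ℕ :=
  sInf {k : ℕ | k = n ∨ 0 < k ∧ ∃ h : k < n, π ⟨k, h⟩ < π ⟨k - 1, by omega⟩}

/-- `π` contains the pattern `σ`. -/
def ContainsPat {n m : ℕ} (π : Equiv.Perm (Fin n)) (σ : Equiv.Perm (Fin m)) : Prop :=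
  ∃ f : Fin m → Fin n, StrictMono f ∧ ∀ a b : Fin m, σ a < σ b ↔ π (f a) < π (f b)

/-- `π` avoids the pattern `σ`. -/
def AvoidsPat {n m : ℕ} (π : Equiv.Perm (Fin n)) (σ : Equiv.Perm (Fin m)) : Prop :=
  ¬ ContainsPat π σ

def pat123 : Equiv.Perm (Fin 3) := ⟨![0, 1, 2], ![0, 1, 2], by decide, by decide⟩
def pat132 : Equiv.Perm (Fin 3) := ⟨![0, 2, 1], ![0, 2, 1], by decide, by decide⟩
def pat213 : Equiv.Perm (Fin 3) := ⟨![1, 0, 2], ![1, 0, 2], by decide, by decide⟩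
def pat231 : Equiv.Perm (Fin 3) := ⟨![1, 2, 0], ![2, 0, 1], by decide, by decide⟩
def pat312 : Equiv.Perm (Fin 3) := ⟨![2, 0, 1], ![1, 2, 0], by decide, by decide⟩
def pat321 : Equiv.Perm (Fin 3) := ⟨![2, 1, 0], ![2, 1, 0], by decide, by decide⟩

/-- Direct sum of two permutations. -/
def directSum {m l : ℕ} (π : Equiv.Perm (Fin m)) (σ : Equiv.Perm (Fin l)) :
    Equiv.Perm (Fin (m + l)) :=
  finSumFinEquiv.permCongr (Equiv.sumCongr π σ)

/-- Direct sum of a finite family of permutations. -/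
def dsum : {k : ℕ} → (a : Fin k → ℕ) → ((i : Fin k) → Equiv.Perm (Fin (a i))) →
    Equiv.Perm (Fin (∑ i, a i))
  | 0, _, _ => Equiv.refl _
  | _ + 1, a, τ =>
      (finCongr (Fin.sum_univ_succ a).symm).permCongr
        (directSum (τ 0) (dsum (fun i => a i.succ) (fun i => τ i.succ)))

/-- Set of values of left-to-right maxima. -/
noncomputable def LMAX {n : ℕ} (π : Equiv.Perm (Fin n)) : Finset (Fin n) :=
  Finset.univ.filter fun v => ∃ i, π i = v ∧ ∀ j, j < i → π j < v

/-- Set of values of left-to-right minima. -/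
noncomputable def LMIN {n : ℕ} (π : Equiv.Perm (Fin n)) : Finset (Fin n) :=
  Finset.univ.filter fun v => ∃ i, π i = v ∧ ∀ j, j < i → v < π j

/-- Set of descent bottoms. -/
noncomputable def DESB {n : ℕ} (π : Equiv.Perm (Fin n)) : Finset (Fin n) :=
  Finset.univ.filter fun v => ∃ i : ℕ, ∃ h : i + 1 < n,
    π ⟨i + 1, h⟩ = v ∧ π ⟨i + 1, h⟩ < π ⟨i, by omega⟩

/-
Idea: avoiding 231, an entry followed by a larger one is smaller than every later entry;
avoiding 213, an entry followed by a smaller one is larger than every later entry. With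
0-based positions and `k = iar π`, the first `k - 1` entries start ascents, so `π` fixes
`0, …, k - 2`, and the entry at `k - 1` (a descent top, or the last entry when `k = n`)
is the largest value `n - 1`. Hence the components end exactly at `0, …, k - 2` and at
`n - 1`: there are `k` of them.
-/

theorem strictMono_vecCons_three {α : Type*} [Preorder α] {a b c : α} (hab : a < b)
    (hbc : b < c) : StrictMono ![a, b, c] := by
  refine Fin.strictMono_iff_lt_succ.2 fun i => ?_
  fin_cases i
  exacts [hab, hbc]

section AvoidsPat

variable {n : ℕ} {π : Equiv.Perm (Fin n)}

theorem AvoidsPat.apply_lt_apply_of_lt_of_pat231 (h : AvoidsPat π pat231) {i j k : Fin n}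
    (hij : i < j) (hjk : j < k) (hlt : π i < π j) : π i < π k := by
  by_contra! hki
  have hki : π k < π i := hki.lt_of_ne (π.injective.ne (hjk.trans' hij).ne')
  refine h ⟨![i, j, k], strictMono_vecCons_three hij hjk, fun a b => ?_⟩
  fin_cases a <;> fin_cases b <;> simp [pat231] <;> order

theorem AvoidsPat.apply_lt_apply_of_gt_of_pat213 (h : AvoidsPat π pat213) {i j k : Fin n}
    (hij : i < j) (hjk : j < k) (hgt : π j < π i) : π k < π i := by
  by_contra! hki
  have hki : π i < π k := hki.lt_of_ne (π.injective.ne (hjk.trans' hij).ne)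
  refine h ⟨![i, j, k], strictMono_vecCons_three hij hjk, fun a b => ?_⟩
  fin_cases a <;> fin_cases b <;> simp [pat213] <;> order

theorem AvoidsPat.apply_lt_apply_of_ascent_of_pat231 (h : AvoidsPat π pat231) {i i' j : Fin n}
    (hi' : (i' : ℕ) = i + 1) (hasc : π i < π i') (hij : i < j) : π i < π j := by
  obtain rfl | hi'j : i' = j ∨ i' < j := by omega
  · exact hasc
  · exact h.apply_lt_apply_of_lt_of_pat231 (by omega) hi'j hasc

theorem AvoidsPat.apply_lt_apply_of_descent_of_pat213 (h : AvoidsPat π pat213) {i i' j : Fin n}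
    (hi' : (i' : ℕ) = i + 1) (hdesc : π i' < π i) (hij : i < j) : π j < π i := by
  obtain rfl | hi'j : i' = j ∨ i' < j := by omega
  · exact hdesc
  · exact h.apply_lt_apply_of_gt_of_pat213 (by omega) hi'j hdesc

end AvoidsPat

section iar

variable {n : ℕ} (π : Equiv.Perm (Fin n))

theorem iar_le : iar π ≤ n :=
  Nat.sInf_le (Or.inl rfl)

theorem iar_mem :
    iar π = n ∨
      0 < iar π ∧ ∃ h : iar π < n, π ⟨iar π, h⟩ < π ⟨iar π - 1, by omega⟩ :=
  Nat.sInf_mem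
    (s := {k | k = n ∨ 0 < k ∧ ∃ h : k < n, π ⟨k, h⟩ < π ⟨k - 1, by omega⟩})
    ⟨n, Or.inl rfl⟩

theorem iar_pos (hn : 0 < n) : 0 < iar π := by
  rcases iar_mem π with h | h
  · omega
  · exact h.1

theorem apply_lt_apply_of_lt_iar {i j : Fin n} (hj : (j : ℕ) = i + 1) (hji : (j : ℕ) < iar π) :
    π i < π j := by
  have hnot := Nat.notMem_of_lt_sInf hji
  have hi : (⟨j - 1, by omega⟩ : Fin n) = i := Fin.ext (by simp only; omega)
  refine lt_of_le_of_ne (not_lt.1 fun hlt => hnot (Or.inr ⟨by omega, j.isLt, by rwa [hi]⟩))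
    (π.injective.ne ?_)
  rw [Ne, Fin.ext_iff]
  omega

theorem apply_lt_apply_at_iar {i j : Fin n} (hj : (j : ℕ) = i + 1) (hji : (j : ℕ) = iar π) :
    π j < π i := by
  rcases iar_mem π with h | ⟨-, _, hdesc⟩
  · omega
  · convert hdesc using 2 <;> ext <;> simp only <;> omega

end iar

theorem Equiv.Perm.apply_eq_self_of_forall_lt {n : ℕ} {π : Equiv.Perm (Fin n)} {p : Fin n}
    (h : ∀ i < p, ∀ j, i < j → π i < π j) : ∀ i < p, π i = i := by
  intro i
  induction i using WellFoundedLT.induction with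
  | _ i ih =>
  intro hip
  rcases lt_trichotomy (π i) i with hlt | heq | hgt
  · exact absurd (π.injective (ih _ hlt (hlt.trans hip))) hlt.ne
  · exact heq
  · -- the value `i` sits at a later position, where `h` makes it exceed `π i`
    have hi : π (π.symm i) = i := π.apply_symm_apply i
    rcases lt_trichotomy (π.symm i) i with hj | hj | hj
    · exact absurd ((ih _ hj (hj.trans hip)).symm.trans hi) hj.ne
    · rwa [hj] at hi
    · exact absurd ((h i hip _ hj).trans_eq hi) (not_lt.2 hgt.le)

theorem Equiv.Perm.apply_eq_last_of_forall_lt {m : ℕ} {π : Equiv.Perm (Fin (m + 1))}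
    {p : Fin (m + 1)} (hfix : ∀ i < p, π i = i) (hfall : ∀ j, p < j → π j < π p) :
    π p = Fin.last m := by
  have hq : π (π.symm (Fin.last m)) = Fin.last m := π.apply_symm_apply _
  rcases lt_trichotomy (π.symm (Fin.last m)) p with hqp | hqp | hpq
  · rw [hfix _ hqp] at hq
    exact absurd (hq ▸ hqp) (not_lt.2 (Fin.le_last p))
  · rwa [hqp] at hq
  · exact absurd (hq ▸ hfall _ hpq) (not_lt.2 (Fin.le_last _))

theorem comps_eq_of_apply_eq_last {m : ℕ} {π : Equiv.Perm (Fin (m + 1))} {p : Fin (m + 1)}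
    (hfix : ∀ i < p, π i = i) (hp : π p = Fin.last m) : comps π = p + 1 := by
  have hends :
      univ.filter (fun i => ∀ j, j ≤ i → π j ≤ i) = insert (Fin.last m) (Iio p) := by
    ext i
    simp only [mem_filter, mem_univ, true_and, mem_insert, mem_Iio]
    constructor
    · intro hi
      by_contra! ⟨hne, hpi⟩
      exact hne (le_antisymm (Fin.le_last i) (hp ▸ hi p hpi))
    · rintro (rfl | hip) j hj
      · exact Fin.le_last _
      · rw [hfix j (hj.trans_lt hip)]; exact hj
  rw [comps, hends, card_insert_of_notMem (by simpa using Fin.le_last p), Fin.card_Iio]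

/-- for every (213,231)-avoiding permutation, `iar(π) = comp(π)`. -/
theorem iar_eq_comps_213_231 (n : ℕ) (hn : 1 ≤ n) (π : Equiv.Perm (Fin n))
    (h1 : AvoidsPat π pat213) (h2 : AvoidsPat π pat231) :
    iar π = comps π := by
  obtain ⟨m, rfl⟩ : ∃ m, n = m + 1 := ⟨n - 1, by omega⟩
  have hkn := iar_le π
  obtain ⟨p, hp⟩ : ∃ p : Fin (m + 1), (p : ℕ) + 1 = iar π :=
    ⟨⟨iar π - 1, by omega⟩, by have := iar_pos π hn; simp only; omega⟩
  have hrise : ∀ i < p, ∀ j, i < j → π i < π j := fun i hip j hij =>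
    h2.apply_lt_apply_of_ascent_of_pat231 (i' := ⟨(i : ℕ) + 1, by omega⟩) rfl
      (apply_lt_apply_of_lt_iar π rfl (by simp only; omega)) hij
  have hfall : ∀ j, p < j → π j < π p := fun j hpj =>
    h1.apply_lt_apply_of_descent_of_pat213 (i' := ⟨(p : ℕ) + 1, by omega⟩) rfl
      (apply_lt_apply_at_iar π rfl hp) hpj
  have hfix := π.apply_eq_self_of_forall_lt hrise
  rw [comps_eq_of_apply_eq_last hfix (π.apply_eq_last_of_forall_lt hfix hfall), hp]
end

section
/- For every permutation π ∈ S_n avoiding the pattern 132, the set of values of the left-to-right maxima of π, read from left to right, forms the sequence of consecutive integers π(1), π(1)+1, π(1)+2, ..., n. -/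
open Finset
open scoped Classical

theorem containsPat_pat132 {n : ℕ} (π : Equiv.Perm (Fin n)) {i j k : Fin n}
    (hij : i < j) (hjk : j < k) (hik : π i < π k) (hkj : π k < π j) :
    ContainsPat π pat132 := by
  refine ⟨![i, j, k], Fin.strictMono_iff_lt_succ.mpr ?_, ?_⟩
  · intro a
    fin_cases a <;> simpa
  · intro a b
    fin_cases a <;> fin_cases b <;>
      simp [pat132, hik, hkj, hik.trans hkj, hik.le, hkj.le, (hik.trans hkj).le]

theorem apply_mem_LMAX_iff {n : ℕ} (π : Equiv.Perm (Fin n)) (i : Fin n) :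
    π i ∈ LMAX π ↔ ∀ j < i, π j < π i := by
  simp only [LMAX, mem_filter, mem_univ, true_and, π.injective.eq_iff]
  exact ⟨fun ⟨_, hi, h⟩ => hi ▸ h, fun h => ⟨i, rfl, h⟩⟩

theorem apply_zero_le_of_mem_LMAX {n : ℕ} (hn : 0 < n) (π : Equiv.Perm (Fin n)) {i : Fin n}
    (hi : π i ∈ LMAX π) : π ⟨0, hn⟩ ≤ π i := by
  rcases (show (⟨0, hn⟩ : Fin n) ≤ i from Nat.zero_le _).eq_or_lt with rfl | h0i
  · exact le_rfl
  · exact ((apply_mem_LMAX_iff π i).mp hi _ h0i).le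

theorem apply_mem_LMAX_of_apply_zero_le {n : ℕ} (hn : 0 < n) {π : Equiv.Perm (Fin n)}
    (h : AvoidsPat π pat132) {i : Fin n} (hi : π ⟨0, hn⟩ ≤ π i) : π i ∈ LMAX π := by
  rw [apply_mem_LMAX_iff]
  intro j hji
  by_contra! hle
  have hij : π i < π j := hle.lt_of_ne (π.injective.ne hji.ne')
  have h0j : (⟨0, hn⟩ : Fin n) < j := by
    refine (show (⟨0, hn⟩ : Fin n) ≤ j from Nat.zero_le _).lt_of_ne ?_
    rintro rfl
    exact (hi.trans_lt hij).false
  have h0i : π ⟨0, hn⟩ < π i := hi.lt_of_ne (π.injective.ne (h0j.trans hji).ne)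
  exact h (containsPat_pat132 π h0j hji h0i hij)

/-- for a 132-avoiding permutation, the values of the left-to-right
maxima are exactly the consecutive integers `π(1), π(1)+1, …, n`. -/
theorem lmax_132_consecutive (n : ℕ) (hn : 0 < n) (π : Equiv.Perm (Fin n))
    (h : AvoidsPat π pat132) :
    LMAX π = Finset.univ.filter fun v : Fin n => π ⟨0, hn⟩ ≤ v := by
  ext v
  obtain ⟨i, rfl⟩ := π.surjective v
  simp only [mem_filter, mem_univ, true_and]
  exact ⟨apply_zero_le_of_mem_LMAX hn π, apply_mem_LMAX_of_apply_zero_le hn h⟩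
end

section
/- For every permutation π ∈ S_n avoiding 132 with comp(π) = k ≥ 2, the last k-1 letters of π are n-k+2, n-k+3, ..., n in increasing order, i.e., π(n-k+1+j) = n-k+1+j for 1 ≤ j ≤ k-1. -/
/-!
The first component ends at the smallest `c` with `π [0, c] = [0, c]`. Everything after it is
mapped after it, and since the value `0` sits in the first component, 132-avoidance forces `π`
to be increasing on the positions after `c`; an increasing self-map of a finite chain is the
identity. So every `i ≥ c` closes a component, `comp(π) = n - c`, and the positions
`i > c = n - comp(π)` are fixed.
-/

open Finset
open scoped Classical

open Equiv
open Set (MapsTo EqOn)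

theorem Equiv.Perm.mapsTo_compl_of_mapsTo {α : Type*} {σ : Perm α} {s : Set α}
    (hs : s.Finite) (h : MapsTo σ s s) : MapsTo σ sᶜ sᶜ :=
  ((hs.injOn_iff_bijOn_of_mapsTo h).mp σ.injective.injOn).surjOn.mapsTo_compl σ.injective

theorem StrictMonoOn.eqOn_id_of_mapsTo {α : Type*} [LinearOrder α] {s : Finset α} {f : α → α}
    (hf : StrictMonoOn f s) (hs : MapsTo f s s) : EqOn f id s := by
  intro x hx
  obtain ⟨i, rfl⟩ : x ∈ Set.range (s.orderEmbOfFin rfl) := by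
    rwa [Finset.range_orderEmbOfFin]
  have hmem : ∀ j, s.orderEmbOfFin rfl j ∈ s := Finset.orderEmbOfFin_mem s rfl
  have hunique := Finset.orderEmbOfFin_unique rfl (f := f ∘ s.orderEmbOfFin rfl)
    (fun j => hs (hmem j))
    (fun j j' hjj' => hf (hmem j) (hmem j') ((s.orderEmbOfFin rfl).strictMono hjj'))
  exact congrFun hunique i

section

variable {n : ℕ} (π : Perm (Fin n))

theorem containsPat_132_of_lt {a b c : Fin n} (hab : a < b) (hbc : b < c)
    (hac : π a < π c) (hcb : π c < π b) : ContainsPat π pat132 := by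
  refine ⟨![a, b, c], ?_, ?_⟩
  · simp [Fin.strictMono_iff_lt_succ, Fin.forall_fin_two, hab, hbc]
  · intro x y
    fin_cases x <;> fin_cases y <;> simp [pat132] <;> order

theorem strictMonoOn_Ioi_of_avoidsPat_132 (h : AvoidsPat π pat132) {a c : Fin n} (hac : a ≤ c)
    (hmin : ∀ q, c < q → π a < π q) : StrictMonoOn π (Set.Ioi c) := by
  intro p hp q hq hpq
  by_contra hle
  have hlt : π q < π p := lt_of_le_of_ne (not_lt.mp hle) (π.injective.ne hpq.ne')
  exact h (containsPat_132_of_lt π (lt_of_le_of_lt hac hp) hpq (hmin q hq) hlt)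

def IsComponentEnd (c : Fin n) : Prop := ∀ j ≤ c, π j ≤ c

theorem comps_eq_card : comps π = (Finset.univ.filter (IsComponentEnd π)).card := by
  unfold comps IsComponentEnd
  convert rfl

variable {π}

theorem IsComponentEnd.lt_apply {c q : Fin n} (hc : IsComponentEnd π c) (hq : c < q) :
    c < π q := by
  have hmaps : MapsTo π (Set.Iic c) (Set.Iic c) := fun j hj => hc j hj
  simpa using π.mapsTo_compl_of_mapsTo (Set.toFinite _) hmaps (not_le.mpr hq)

theorem IsComponentEnd.le_of_apply_le {c a : Fin n} (hc : IsComponentEnd π c) (ha : π a ≤ c) :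
    a ≤ c :=
  not_lt.mp fun hca => (hc.lt_apply hca).not_ge ha

theorem exists_isComponentEnd_isLeast (hn : 0 < n) :
    ∃ c, IsComponentEnd π c ∧ ∀ d, IsComponentEnd π d → c ≤ d := by
  have hends : (Finset.univ.filter (IsComponentEnd π)).Nonempty :=
    ⟨⟨n - 1, by omega⟩, by simp [IsComponentEnd, Fin.le_def]; omega⟩
  exact ⟨_, by simpa using Finset.min'_mem _ hends,
    fun d hd => Finset.min'_le _ d (Finset.mem_filter.mpr ⟨Finset.mem_univ d, hd⟩)⟩

theorem comps_eq_sub_of_eqOn {c : Fin n} (hc : IsComponentEnd π c)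
    (hfirst : ∀ d, IsComponentEnd π d → c ≤ d) (hfix : EqOn π id (Set.Ioi c)) :
    comps π = n - c := by
  have hends : Finset.univ.filter (IsComponentEnd π) = Finset.Ici c := by
    ext d
    simp only [Finset.mem_filter, Finset.mem_univ, true_and, Finset.mem_Ici]
    refine ⟨hfirst d, fun hcd j hjd => ?_⟩
    rcases le_or_gt j c with hjc | hcj
    · exact (hc j hjc).trans hcd
    · rwa [hfix hcj]
  rw [comps_eq_card, hends, Fin.card_Ici]

end

theorem last_letters_132_general (n k : ℕ) (π : Equiv.Perm (Fin n))
    (h : AvoidsPat π pat132) (hk : comps π = k) :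
    ∀ i : Fin n, n - k + 1 ≤ (i : ℕ) → π i = i := by
  intro i hi
  have hn : 0 < n := i.pos
  obtain ⟨c, hc, hfirst⟩ := exists_isComponentEnd_isLeast (π := π) hn
  obtain ⟨a, ha⟩ : ∃ a, π a = ⟨0, hn⟩ := π.surjective _
  have hac : a ≤ c := hc.le_of_apply_le (ha ▸ Nat.zero_le c)
  have hmono : StrictMonoOn π (Set.Ioi c) := strictMonoOn_Ioi_of_avoidsPat_132 π h hac
    fun q hq => ha ▸ (Nat.zero_le c).trans_lt (hc.lt_apply hq)
  have hfix : EqOn π id (Set.Ioi c) := by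
    rw [← Finset.coe_Ioi] at hmono ⊢
    exact hmono.eqOn_id_of_mapsTo fun q hq => by simpa using hc.lt_apply (by simpa using hq)
  have hck : n - k = c := by
    rw [← hk, comps_eq_sub_of_eqOn hc hfirst hfix]
    omega
  exact hfix (Fin.lt_def.mpr (by omega))

/-- for a 132-avoiding permutation with `comp(π) = k ≥ 2`, the last `k-1`
letters are `n-k+2, …, n` in increasing order, i.e. all positions `i` (0-based) with
`i ≥ n-k+1` are fixed points. -/
theorem last_letters_132 (n k : ℕ) (π : Equiv.Perm (Fin n))
    (h : AvoidsPat π pat132) (hk : comps π = k) (h2 : 2 ≤ k) :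
    ∀ i : Fin n, n - k + 1 ≤ (i : ℕ) → π i = i :=
  last_letters_132_general n k π h hk
end

section
/- Every indecomposable permutation in S_n (n ≥ 2) avoiding both 312 and 321 equals the permutation 2 3 4 ... n 1. -/
open Finset
open scoped Classical

/-- A permutation of `[n]` is indecomposable iff there is no `1 ≤ i < n` with
`π(j) ≤ i` for all `j ≤ i` (1-based; 0-based below). -/
def IndecompN {n : ℕ} (π : Equiv.Perm (Fin n)) : Prop :=
  ¬ ∃ i : ℕ, 1 ≤ i ∧ i < n ∧ ∀ j : Fin n, (j : ℕ) < i → (π j : ℕ) < i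

/-! Avoiding both `312` and `321` means that every entry has at most one smaller entry to its
right. Suppose `π(j) = j + 1` for all `j < i < n - 1`. Then `π(i) ≠ 0`, since otherwise `π` would
split after position `i`, so `π(i) ≥ i + 1`. If `π(i) > i + 1`, both values `0` and `i + 1` would
sit to the right of `i` below `π(i)`. Hence `π(i) = i + 1` for all `i < n - 1`, and the last
entry is `0`. -/

lemma strictMono_vecCons₃ {n : ℕ} {i j k : Fin n} (hij : i < j) (hjk : j < k) :
    StrictMono ![i, j, k] := by
  simp [Fin.strictMono_iff_lt_succ, Fin.forall_fin_two, hij, hjk]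

namespace Equiv.Perm

variable {n : ℕ} (π : Equiv.Perm (Fin n))

lemma containsPat_of_strictMono_comp {m : ℕ} {σ : Equiv.Perm (Fin m)} {f : Fin m → Fin n}
    (hf : StrictMono f) (hπf : StrictMono (π ∘ f ∘ σ.symm)) : ContainsPat π σ :=
  ⟨f, hf, fun a b => by simpa using (hπf.lt_iff_lt (a := σ a) (b := σ b)).symm⟩

variable {π} {i j k : Fin n}

lemma containsPat_312 (hij : i < j) (hjk : j < k) (h₁ : π j < π k) (h₂ : π k < π i) :
    ContainsPat π pat312 :=
  π.containsPat_of_strictMono_comp (strictMono_vecCons₃ hij hjk) <| by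
    simp [Fin.strictMono_iff_lt_succ, Fin.forall_fin_two, pat312, h₁, h₂]

lemma containsPat_321 (hij : i < j) (hjk : j < k) (h₁ : π k < π j) (h₂ : π j < π i) :
    ContainsPat π pat321 :=
  π.containsPat_of_strictMono_comp (strictMono_vecCons₃ hij hjk) <| by
    simp [Fin.strictMono_iff_lt_succ, Fin.forall_fin_two, pat321, h₁, h₂]

lemma eq_of_avoids_312_321 (h312 : AvoidsPat π pat312) (h321 : AvoidsPat π pat321)
    (hij : i < j) (hik : i < k) (hj : π j < π i) (hk : π k < π i) : j = k := by
  wlog hjk : j < k generalizing j k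
  · rcases (not_lt.mp hjk).eq_or_lt with h | h
    · exact h.symm
    · exact (this hik hij hk hj h).symm
  rcases lt_or_gt_of_ne (π.injective.ne hjk.ne) with h | h
  · exact (h312 (containsPat_312 hij hjk h hk)).elim
  · exact (h321 (containsPat_321 hij hjk h hj)).elim

lemma val_apply_eq_succ_of_indecomp (h312 : AvoidsPat π pat312) (h321 : AvoidsPat π pat321)
    (hind : IndecompN π) (i : Fin n) (hi : (i : ℕ) + 1 < n) : (π i : ℕ) = i + 1 := by
  induction i using WellFoundedLT.induction with
  | ind i ih =>
    have hprev : ∀ j < i, (π j : ℕ) = j + 1 := fun j hj => ih j hj (by omega)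
    -- the values `1, …, i` are already taken by the positions before `i`
    have hpos : ∀ j, 0 < (π j : ℕ) → (π j : ℕ) ≤ i → j < i := by
      intro j h0 hle
      have hlt : (π j : ℕ) - 1 < i := by omega
      have : π ⟨_, hlt.trans i.isLt⟩ = π j := Fin.ext (by rw [hprev _ hlt, Fin.val_mk]; omega)
      exact π.injective this ▸ hlt
    have hge : i + 1 ≤ (π i : ℕ) := by
      by_contra! hlt
      rcases Nat.eq_zero_or_pos (π i) with h0 | h0
      · refine hind ⟨i + 1, by omega, hi, fun j hj => ?_⟩
        rcases (Nat.lt_succ_iff.mp hj).lt_or_eq with h | h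
        · rw [hprev j h]; omega
        · rw [show j = i from Fin.ext h, h0]; omega
      · exact lt_irrefl i (hpos i h0 (by omega))
    by_contra hne
    set k := π.symm ⟨i + 1, hi⟩
    set m := π.symm ⟨0, by omega⟩
    have hk : (π k : ℕ) = i + 1 := by simp [k]
    have hm : (π m : ℕ) = 0 := by simp [m]
    have hright : ∀ j, ((π j : ℕ) = 0 ∨ (π j : ℕ) = i + 1) → i < j := by
      intro j hj
      by_contra! hji
      rcases hji.lt_or_eq with h | rfl
      · have := hprev j h; omega
      · omega
    have : k = m := eq_of_avoids_312_321 h312 h321 (hright k (.inr hk)) (hright m (.inl hm))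
      (by rw [Fin.lt_def]; omega) (by rw [Fin.lt_def]; omega)
    rw [this] at hk
    omega

end Equiv.Perm

theorem indecomp_avoid_312_321_general (n : ℕ) (π : Equiv.Perm (Fin n))
    (h1 : AvoidsPat π pat312) (h2 : AvoidsPat π pat321) (hind : IndecompN π) :
    π = finRotate n := by
  have hsucc := π.val_apply_eq_succ_of_indecomp h1 h2 hind
  obtain _ | n := n
  · exact Subsingleton.elim _ _
  have hlast : π (Fin.last n) = 0 := by
    have hm : π.symm 0 = Fin.last n := by
      by_contra h
      have := hsucc (π.symm 0) (by have := Fin.val_lt_last h; omega)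
      simp at this
    rw [← hm, Equiv.apply_symm_apply]
  ext x
  by_cases hx : x = Fin.last n
  · simp [hx, hlast]
  · rw [coe_finRotate_of_ne_last hx, hsucc x (by have := Fin.val_lt_last hx; omega)]

/-- every indecomposable (312,321)-avoiding permutation of `[n]`, `n ≥ 2`,
equals `2 3 4 ⋯ n 1`, i.e. `finRotate n`. -/
theorem indecomp_avoid_312_321 (n : ℕ) (hn : 2 ≤ n) (π : Equiv.Perm (Fin n))
    (h1 : AvoidsPat π pat312) (h2 : AvoidsPat π pat321) (hind : IndecompN π) :
    π = finRotate n :=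
  indecomp_avoid_312_321_general n π h1 h2 hind
end

section
/- Every indecomposable permutation in S_n (n ≥ 2) avoiding both 231 and 321 equals the permutation n 1 2 ... (n-1). -/
open Finset
open scoped Classical

/-!
Avoiding 231 and 321 means that no entry has two larger entries to its left, so (0-based)
`k ≤ π k + 1` for every position `k`. If moreover `π k ≥ k` for some `k ≥ 1`, the `k` values
below `k` sit at positions `≤ k` other than `k`, i.e. exactly at the positions below `k`, and `π`
would decompose at `k`. Hence `π k = k - 1` for `k ≥ 1`, which leaves `π 0 = n - 1`.
-/

lemma containsPat_pat231_or_pat321_of_lt_of_lt {n : ℕ} (π : Equiv.Perm (Fin n)) {i j k : Fin n}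
    (hij : i < j) (hjk : j < k) (hi : π k < π i) (hj : π k < π j) :
    ContainsPat π pat231 ∨ ContainsPat π pat321 := by
  have hmono : StrictMono ![i, j, k] := by
    simp [Fin.strictMono_iff_lt_succ, Fin.forall_fin_succ, hij, hjk]
  rcases lt_or_gt_of_ne (π.injective.ne hij.ne) with h | h
  · exact .inl ⟨![i, j, k], hmono, by
      simp [Fin.forall_fin_succ, pat231, h, h.le, hi, hi.le, hj, hj.le]⟩
  · exact .inr ⟨![i, j, k], hmono, by
      simp [Fin.forall_fin_succ, pat321, h, h.le, hi, hi.le, hj, hj.le]⟩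

lemma le_apply_add_one_of_avoidsPat {n : ℕ} {π : Equiv.Perm (Fin n)}
    (h231 : AvoidsPat π pat231) (h321 : AvoidsPat π pat321) (k : Fin n) :
    (k : ℕ) ≤ π k + 1 := by
  have hsmaller : ((Iio k).filter fun j => π j < π k).card ≤ π k := by
    calc ((Iio k).filter fun j => π j < π k).card
        ≤ (Iio (π k)).card :=
          card_le_card_of_injOn π (fun j hj => by simp_all) π.injective.injOn
      _ = π k := Fin.card_Iio _
  have hlarger : ((Iio k).filter fun j => ¬π j < π k).card ≤ 1 := by
    refine card_le_one.mpr fun a ha b hb => ?_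
    simp only [mem_filter, mem_Iio, not_lt] at ha hb
    have hka : π k < π a := ha.2.lt_of_ne (π.injective.ne ha.1.ne')
    have hkb : π k < π b := hb.2.lt_of_ne (π.injective.ne hb.1.ne')
    by_contra hab
    rcases lt_or_gt_of_ne hab with h | h
    · exact (containsPat_pat231_or_pat321_of_lt_of_lt π h hb.1 hka hkb).elim h231 h321
    · exact (containsPat_pat231_or_pat321_of_lt_of_lt π h ha.1 hkb hka).elim h231 h321
  have hsplit := card_filter_add_card_filter_not (s := Iio k) fun j => π j < π k
  rw [Fin.card_Iio] at hsplit
  omega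

lemma apply_eq_sub_one_of_indecompN {n : ℕ} {π : Equiv.Perm (Fin n)}
    (hle : ∀ k : Fin n, (k : ℕ) ≤ π k + 1) (hind : IndecompN π) (k : Fin n) (hk : 0 < (k : ℕ)) :
    (π k : ℕ) = k - 1 := by
  suffices π k < k by have := hle k; omega
  by_contra! hge
  refine hind ⟨k, hk, k.isLt, fun j hj => ?_⟩
  have hmaps : (Iio k).map π.symm.toEmbedding ⊆ Iio k := by
    intro p hp
    obtain ⟨v, hv, rfl⟩ := mem_map.mp hp
    have hv' : v < k := mem_Iio.mp hv
    have hne : π.symm v ≠ k := fun h => by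
      rw [Equiv.symm_apply_eq] at h
      exact hv'.not_ge (h ▸ hge)
    have := hle (π.symm v)
    rw [Equiv.apply_symm_apply] at this
    simp only [mem_Iio, Equiv.coe_toEmbedding]
    exact lt_of_le_of_ne (Fin.le_def.mpr (by omega)) hne
  have hj' : j ∈ (Iio k).map π.symm.toEmbedding := by
    rw [map_eq_of_subset hmaps]
    exact mem_Iio.mpr hj
  obtain ⟨v, hv, rfl⟩ := mem_map.mp hj'
  simpa using hv

lemma eq_finRotate_inv_of_apply_eq_sub_one {n : ℕ} {π : Equiv.Perm (Fin n)}
    (h : ∀ k : Fin n, 0 < (k : ℕ) → (π k : ℕ) = k - 1) : π = (finRotate n)⁻¹ := by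
  rcases n with _ | m
  · exact Subsingleton.elim _ _
  have hzero : π 0 = Fin.last m := by
    by_contra hne
    have hlt : (π 0 : ℕ) < m := Fin.val_lt_last hne
    have hval : π ⟨π 0 + 1, by omega⟩ = π 0 := Fin.ext (h _ (Nat.succ_pos _))
    exact Nat.succ_ne_zero _ (congrArg Fin.val (π.injective hval))
  ext1 k
  rw [eq_comm, Equiv.Perm.inv_eq_iff_eq]
  rcases Nat.eq_zero_or_pos k with hk | hk
  · rw [show k = 0 from Fin.ext hk, hzero, finRotate_last]
  · have hk' := h k hk
    have hne : π k ≠ Fin.last m := fun hl => by rw [hl, Fin.val_last] at hk'; omega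
    exact Fin.ext (by rw [coe_finRotate_of_ne_last hne]; omega)

theorem indecomp_avoid_231_321_general (n : ℕ) (π : Equiv.Perm (Fin n))
    (h1 : AvoidsPat π pat231) (h2 : AvoidsPat π pat321) (hind : IndecompN π) :
    π = (finRotate n)⁻¹ :=
  eq_finRotate_inv_of_apply_eq_sub_one
    (apply_eq_sub_one_of_indecompN (le_apply_add_one_of_avoidsPat h1 h2) hind)

/-- every indecomposable (231,321)-avoiding permutation of `[n]`, `n ≥ 2`,
equals `n 1 2 ⋯ (n-1)`, i.e. `(finRotate n)⁻¹`. -/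
theorem indecomp_avoid_231_321 (n : ℕ) (hn : 2 ≤ n) (π : Equiv.Perm (Fin n))
    (h1 : AvoidsPat π pat231) (h2 : AvoidsPat π pat321) (hind : IndecompN π) :
    π = (finRotate n)⁻¹ :=
  indecomp_avoid_231_321_general n π h1 h2 hind
end

section
/- For every n ≥ 1 and every permutation π ∈ S_n avoiding 312, the union LMAX(π) ∪ DESB(π) equals [n], where LMAX(π) is the set of values of left-to-right maxima and DESB(π) the set of descent bottoms. -/
open Finset
open scoped Classical

theorem containsPat_pat312 {n : ℕ} {π : Equiv.Perm (Fin n)} {i j k : Fin n}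
    (hij : i < j) (hjk : j < k) (hπjk : π j < π k) (hπki : π k < π i) :
    ContainsPat π pat312 := by
  refine ⟨![i, j, k], Fin.strictMono_iff_lt_succ.2 fun a => ?_, fun a b => ?_⟩
  · fin_cases a <;> simpa
  · fin_cases a <;> fin_cases b <;> simp [pat312, hπjk, hπki, hπjk.trans hπki,
      hπjk.not_gt, hπki.not_gt, (hπjk.trans hπki).not_gt]

theorem mem_LMAX_apply_iff {n : ℕ} {π : Equiv.Perm (Fin n)} {i : Fin n} :
    π i ∈ LMAX π ↔ ∀ j < i, π j < π i := by
  simp only [LMAX, mem_filter, mem_univ, true_and, EmbeddingLike.apply_eq_iff_eq,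
    exists_eq_left]

theorem apply_mem_DESB {n : ℕ} {π : Equiv.Perm (Fin n)} {i j : Fin n}
    (hij : (i : ℕ) + 1 = j) (hdes : π j < π i) : π j ∈ DESB π := by
  simp only [DESB, mem_filter, mem_univ, true_and]
  exact ⟨i, by omega, by simp only [hij], by simpa only [hij] using hdes⟩

-- An earlier entry above `π j` would be the `3` of a `312` whose `12` is the ascent `π i < π j`.
theorem AvoidsPat.apply_mem_LMAX_of_ascent {n : ℕ} {π : Equiv.Perm (Fin n)}
    (h : AvoidsPat π pat312) {i j : Fin n} (hij : (i : ℕ) + 1 = j) (hasc : π i < π j) :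
    π j ∈ LMAX π := by
  refine mem_LMAX_apply_iff.2 fun k hkj => ?_
  by_contra! hle
  have hlt : π j < π k := hle.lt_of_ne (π.injective.ne (ne_of_gt hkj))
  have hki : k < i := by
    refine lt_of_le_of_ne (Fin.le_iff_val_le_val.2 ?_) ?_
    · have := Fin.lt_def.1 hkj; omega
    · rintro rfl; exact (hasc.trans hlt).false
  exact h (containsPat_pat312 hki (Fin.lt_def.2 (by omega)) hasc hlt)

theorem lmax_union_desb_312_general (n : ℕ) (π : Equiv.Perm (Fin n))
    (h : AvoidsPat π pat312) :
    LMAX π ∪ DESB π = Finset.univ := by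
  refine eq_univ_of_forall fun v => ?_
  obtain ⟨j, rfl⟩ := π.surjective v
  rw [mem_union]
  obtain hj | hj := Nat.eq_zero_or_pos j
  · left
    exact mem_LMAX_apply_iff.2 fun k hk => by simp [Fin.lt_def, hj] at hk
  set i : Fin n := ⟨j - 1, by omega⟩
  have hij : (i : ℕ) + 1 = j := by simp only [i]; omega
  rcases (π.injective.ne (Fin.ne_of_val_ne (by omega) : i ≠ j)).lt_or_gt with hasc | hdes
  · exact .inl (h.apply_mem_LMAX_of_ascent hij hasc)
  · exact .inr (apply_mem_DESB hij hdes)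

/-- for a 312-avoiding permutation, every value is a left-to-right
maximum or a descent bottom: `LMAX(π) ∪ DESB(π) = [n]`. -/
theorem lmax_union_desb_312 (n : ℕ) (hn : 1 ≤ n) (π : Equiv.Perm (Fin n))
    (h : AvoidsPat π pat312) :
    LMAX π ∪ DESB π = Finset.univ :=
  lmax_union_desb_312_general n π h
end

section
/- Let I_{n,k} denote the number of 021-avoiding inversion sequences of length n with exactly k initial zeros. Then I_{1,1} = 1, and for n ≥ 2: I_{n,1} = Σ_{k=1}^{n-1} 2^{k-1} I_{n-1,k}, and for 2 ≤ i ≤ n: I_{n,i} = I_{n-1,i-1} + Σ_{k=i}^{n-1} 2^{k-i} I_{n-1,k}. -/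
open Finset
open scoped Classical

/-- `e` is an inversion sequence: `0 ≤ e_i < i` (1-based), i.e. `e i < i+1` (0-based). -/
def InvSeq {n : ℕ} (e : Fin n → ℕ) : Prop := ∀ i : Fin n, e i < (i : ℕ) + 1

/-- `e` is 021-avoiding: its positive entries are weakly increasing. -/
def Avoid021 {n : ℕ} (e : Fin n → ℕ) : Prop :=
  ∀ i j : Fin n, i ≤ j → 0 < e i → 0 < e j → e i ≤ e j

/-- Number of initial zeros of `e`: the 0-based position of the first nonzero
entry (or `n` if all entries are zero). -/
noncomputable def izero {n : ℕ} (e : Fin n → ℕ) : ℕ :=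
  sInf {i : ℕ | i = n ∨ ∃ h : i < n, e ⟨i, h⟩ ≠ 0}

/-- `I n k`: the number of 021-avoiding inversion sequences of length `n` with
exactly `k` initial zeros. -/
noncomputable def numInvSeq (n k : ℕ) : ℕ :=
  {e : Fin n → ℕ | InvSeq e ∧ Avoid021 e ∧ izero e = k}.ncard


/-!
Deleting the leading zero of `e` and lowering every entry by one (so that `1` becomes `0`)
maps a 021-avoiding inversion sequence of length `m + 1` with `i` initial zeros to one of
length `m` with `k ≥ i - 1` initial zeros. Since the positive entries of `e` increase, its `1`s
sit between position `i` (its first nonzero entry) and position `k + 1` (its first entry `≥ 2`).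
The `1` at position `i` is forced when `k ≥ i`, and the `1`s at positions `i + 1, …, k` can be
chosen freely, so the fibre over a sequence with `k` initial zeros has `2 ^ (k - i)` elements,
or one element when `k = i - 1`.
-/

section Izero

variable {n : ℕ} {e : Fin n → ℕ} {k : ℕ}

theorem izero_eq_iff :
    izero e = k ↔
      k ≤ n ∧ (∀ j : Fin n, (j : ℕ) < k → e j = 0) ∧ ∀ h : k < n, e ⟨k, h⟩ ≠ 0 := by
  have hne : {i : ℕ | i = n ∨ ∃ h : i < n, e ⟨i, h⟩ ≠ 0}.Nonempty := ⟨n, Or.inl rfl⟩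
  constructor
  · rintro rfl
    refine ⟨Nat.sInf_le (Or.inl rfl), fun j hj => ?_, fun h => ?_⟩
    · by_contra hej
      exact (Nat.sInf_le (Or.inr ⟨j.isLt, hej⟩)).not_gt hj
    · obtain h' | ⟨_, hk⟩ := Nat.sInf_mem hne
      · exact absurd h' h.ne
      · exact hk
  · rintro ⟨hkn, hzero, hk⟩
    refine le_antisymm (Nat.sInf_le ?_) (le_csInf hne ?_)
    · obtain hkn | hkn := hkn.eq_or_lt
      exacts [Or.inl hkn, Or.inr ⟨hkn, hk hkn⟩]
    · rintro b (rfl | ⟨hb, hbe⟩)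
      · exact hkn
      · exact not_lt.mp fun hbk => hbe (hzero ⟨b, hb⟩ hbk)

theorem izero_le : izero e ≤ n :=
  (izero_eq_iff.mp rfl).1

theorem eq_zero_of_lt_izero (j : Fin n) (hj : (j : ℕ) < izero e) : e j = 0 :=
  (izero_eq_iff.mp rfl).2.1 j hj

theorem ne_zero_at_izero (h : izero e < n) : e ⟨izero e, h⟩ ≠ 0 :=
  (izero_eq_iff.mp rfl).2.2 h

theorem InvSeq.izero_pos (he : InvSeq e) (hn : 0 < n) : 0 < izero e := by
  by_contra! h
  obtain ⟨-, -, h0⟩ := izero_eq_iff.mp (Nat.le_zero.mp h)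
  have := he ⟨0, hn⟩
  exact h0 hn (by simp only at this; omega)

end Izero

/-- Truncated subtraction: entries `0` and `1` of the tail both become `0`. -/
def lowerTail {m : ℕ} (e : Fin (m + 1) → ℕ) : Fin m → ℕ :=
  fun j => e j.succ - 1

/-- `S` holds positions of `e`: the new `1`s land one place to the right. -/
def raiseCons {m : ℕ} (S : Finset ℕ) (e : Fin m → ℕ) : Fin (m + 1) → ℕ :=
  Fin.cons 0 fun j => if e j = 0 then (if (j : ℕ) ∈ S then 1 else 0) else e j + 1

section Lower

variable {m : ℕ} {e : Fin (m + 1) → ℕ}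

theorem invSeq_lowerTail (he : InvSeq e) : InvSeq (lowerTail e) := fun j => by
  have := he j.succ
  simp only [Fin.val_succ] at this
  simp only [lowerTail]
  omega

theorem avoid021_lowerTail (he : Avoid021 e) : Avoid021 (lowerTail e) := fun a b hab ha hb => by
  simp only [lowerTail] at ha hb ⊢
  have := he a.succ b.succ (Fin.succ_le_succ_iff.mpr hab) (by omega) (by omega)
  omega

theorem izero_sub_one_le_izero_lowerTail : izero e - 1 ≤ izero (lowerTail e) := by
  by_contra! h
  have hlt : izero (lowerTail e) < m := by have := izero_le (e := e); omega
  apply ne_zero_at_izero hlt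
  simp only [lowerTail]
  rw [eq_zero_of_lt_izero (e := e) (⟨izero (lowerTail e), hlt⟩ : Fin m).succ
    (by simp only [Fin.val_succ]; omega)]

/-- Entries equal to `1` precede the first entry `≥ 2`. -/
theorem Avoid021.lt_izero_lowerTail (he : Avoid021 e) {j : Fin m} (hj : e j.succ = 1) :
    (j : ℕ) < izero (lowerTail e) := by
  by_contra! h
  have hlt : izero (lowerTail e) < m := lt_of_le_of_lt h j.isLt
  have hpos := ne_zero_at_izero hlt
  simp only [lowerTail] at hpos
  have := he (⟨_, hlt⟩ : Fin m).succ j.succ (Fin.succ_le_succ_iff.mpr (Fin.le_def.mpr h))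
    (by omega) (by omega)
  omega

end Lower

section Raise

variable {m : ℕ} {S T : Finset ℕ} {e : Fin m → ℕ} {a i : ℕ}

@[simp] theorem raiseCons_zero : raiseCons S e 0 = 0 := rfl

@[simp] theorem raiseCons_succ (j : Fin m) :
    raiseCons S e j.succ = if e j = 0 then (if (j : ℕ) ∈ S then 1 else 0) else e j + 1 :=
  Fin.cons_succ ..

@[simp] theorem lowerTail_raiseCons : lowerTail (raiseCons S e) = e := by
  funext j
  simp only [lowerTail, raiseCons_succ]
  split_ifs <;> omega

theorem invSeq_raiseCons (he : InvSeq e) : InvSeq (raiseCons S e) := fun j => by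
  cases j using Fin.cases with
  | zero => simp
  | succ j =>
    have := he j
    simp only [raiseCons_succ, Fin.val_succ]
    split_ifs <;> omega

theorem avoid021_raiseCons (he : Avoid021 e)
    (hS : ∀ j : Fin m, (j : ℕ) ∈ S → e j = 0 → (j : ℕ) < izero e) :
    Avoid021 (raiseCons S e) := by
  intro a b hab ha hb
  cases a using Fin.cases with
  | zero => simp at ha
  | succ a =>
  cases b using Fin.cases with
  | zero => simp at hb
  | succ b =>
  rw [Fin.succ_le_succ_iff] at hab
  simp only [raiseCons_succ] at ha hb ⊢
  by_cases hea : e a = 0 <;> by_cases heb : e b = 0 <;>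
    simp only [hea, heb, if_true, if_false] at ha hb ⊢
  · split_ifs at ha hb ⊢ <;> omega
  · split_ifs <;> omega
  · split_ifs at hb with hbS
    · exact absurd (eq_zero_of_lt_izero a (lt_of_le_of_lt hab (hS b hbS heb))) hea
    · omega
  · have := he a b hab (Nat.pos_of_ne_zero hea) (Nat.pos_of_ne_zero heb)
    omega

theorem raiseCons_insert_erase (h : ∀ j : Fin m, (j : ℕ) = a → e j = 0 → a ∈ S) :
    raiseCons (insert a (S.erase a)) e = raiseCons S e := by
  funext j
  cases j using Fin.cases with
  | zero => rfl
  | succ j =>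
    simp only [raiseCons_succ, mem_insert, mem_erase]
    by_cases hj : (j : ℕ) = a
    · by_cases hej : e j = 0
      · simp [hj, hej, h j hj hej]
      · simp [hej]
    · simp [hj]

theorem izero_raiseCons (hi : 1 ≤ i) (him : i ≤ m + 1) (hie : i - 1 ≤ izero e)
    (hT : ∀ j ∈ T, i ≤ j) : izero (raiseCons (insert (i - 1) T) e) = i := by
  refine izero_eq_iff.mpr ⟨him, fun j hj => ?_, fun h => ?_⟩
  · cases j using Fin.cases with
    | zero => rfl
    | succ j =>
      simp only [Fin.val_succ] at hj
      have hjT : (j : ℕ) ∉ insert (i - 1) T := by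
        simp only [mem_insert, not_or]
        exact ⟨by omega, fun hj' => by have := hT _ hj'; omega⟩
      simp [eq_zero_of_lt_izero (e := e) j (by omega), hjT]
  · have hsucc : (⟨i, h⟩ : Fin (m + 1)) = (⟨i - 1, by omega⟩ : Fin m).succ := by
      ext; simp only [Fin.val_succ]; omega
    rw [hsucc, raiseCons_succ]
    split_ifs <;> simp_all

end Raise

def onePositions {m : ℕ} (e : Fin (m + 1) → ℕ) : Finset ℕ :=
  (univ.filter fun j : Fin m => e j.succ = 1).map Fin.valEmbedding

section OnePositions

variable {m : ℕ}

theorem val_mem_onePositions {e : Fin (m + 1) → ℕ} {j : Fin m} :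
    (j : ℕ) ∈ onePositions e ↔ e j.succ = 1 := by
  simp [onePositions, Fin.val_inj]

theorem raiseCons_onePositions_lowerTail {e : Fin (m + 1) → ℕ} (h0 : e 0 = 0) :
    raiseCons (onePositions e) (lowerTail e) = e := by
  funext j
  cases j using Fin.cases with
  | zero => exact h0.symm
  | succ j =>
    simp only [raiseCons_succ, lowerTail, val_mem_onePositions]
    split_ifs <;> omega

theorem erase_onePositions_raiseCons {e : Fin m → ℕ} {T : Finset ℕ} {a : ℕ}
    (hT : ∀ j ∈ T, a < j ∧ j < izero e) :
    (onePositions (raiseCons (insert a T) e)).erase a = T := by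
  ext j
  simp only [mem_erase, onePositions, mem_map, mem_filter, mem_univ, true_and,
    Fin.valEmbedding_apply, raiseCons_succ]
  constructor
  · rintro ⟨hja, b, hb, rfl⟩
    split_ifs at hb with heb hbS
    · exact (mem_insert.mp hbS).resolve_left hja
    · omega
  · intro hj
    have hjm : j < m := lt_of_lt_of_le (hT j hj).2 izero_le
    refine ⟨(hT j hj).1.ne', ⟨j, hjm⟩, ?_, rfl⟩
    rw [if_pos (eq_zero_of_lt_izero ⟨j, hjm⟩ (hT j hj).2), if_pos (mem_insert_of_mem hj)]

end OnePositions

noncomputable def invSeq021 (n k : ℕ) : Finset (Fin n → ℕ) :=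
  (Fintype.piFinset fun j : Fin n => range (j + 1)).filter fun e => Avoid021 e ∧ izero e = k

section Counting

variable {m i k : ℕ}

theorem mem_invSeq021 {n : ℕ} {e : Fin n → ℕ} :
    e ∈ invSeq021 n k ↔ InvSeq e ∧ Avoid021 e ∧ izero e = k := by
  simp [invSeq021, InvSeq, Fintype.mem_piFinset]

theorem numInvSeq_eq_card (n k : ℕ) : numInvSeq n k = (invSeq021 n k).card := by
  rw [numInvSeq, ← Set.ncard_coe_finset]
  congr
  ext e
  simp [mem_invSeq021]

theorem numInvSeq_zero_of_pos (hm : 0 < m) : numInvSeq m 0 = 0 := by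
  rw [numInvSeq_eq_card, card_eq_zero, eq_empty_iff_forall_notMem]
  intro e he
  obtain ⟨hinv, -, h0⟩ := mem_invSeq021.mp he
  exact (hinv.izero_pos hm).ne' h0

theorem numInvSeq_zero_zero : numInvSeq 0 0 = 1 := by
  rw [numInvSeq_eq_card, card_eq_one]
  refine ⟨Fin.elim0, eq_singleton_iff_unique_mem.mpr ⟨?_, fun e _ => funext fun j => j.elim0⟩⟩
  exact mem_invSeq021.mpr
    ⟨fun j => j.elim0, fun j => j.elim0, izero_eq_iff.mpr ⟨le_rfl, fun j => j.elim0, nofun⟩⟩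

theorem raiseCons_mem_invSeq021 (hi : 1 ≤ i) (hik : i - 1 ≤ k) (hkm : k ≤ m)
    {e : Fin m → ℕ} (he : e ∈ invSeq021 m k) {T : Finset ℕ} (hT : T ⊆ Ico i k) :
    raiseCons (insert (i - 1) T) e ∈ invSeq021 (m + 1) i := by
  obtain ⟨hinv, havoid, rfl⟩ := mem_invSeq021.mp he
  refine mem_invSeq021.mpr
    ⟨invSeq_raiseCons hinv, avoid021_raiseCons havoid fun j hj hej => ?_,
      izero_raiseCons hi (by omega) hik fun j hj => (mem_Ico.mp (hT hj)).1⟩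
  obtain hj | hj := mem_insert.mp hj
  · refine lt_of_le_of_ne (hj ▸ hik) fun hjk => ne_zero_at_izero (e := e) (hjk ▸ j.isLt) ?_
    rwa [show (⟨izero e, _⟩ : Fin m) = j from Fin.ext hjk.symm]
  · exact (mem_Ico.mp (hT hj)).2

theorem raiseCons_lowerTail (hi : 1 ≤ i) {e : Fin (m + 1) → ℕ} (he : e ∈ invSeq021 (m + 1) i) :
    raiseCons (insert (i - 1) ((onePositions e).erase (i - 1))) (lowerTail e) = e := by
  obtain ⟨-, -, hiz⟩ := mem_invSeq021.mp he
  rw [raiseCons_insert_erase fun j hj hej => ?_,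
    raiseCons_onePositions_lowerTail (eq_zero_of_lt_izero 0 (by rw [Fin.val_zero]; omega))]
  have hne := ne_zero_at_izero (e := e) (by omega)
  have hsucc : (⟨izero e, by omega⟩ : Fin (m + 1)) = j.succ := by
    ext; simp only [Fin.val_succ]; omega
  rw [hsucc] at hne
  simp only [lowerTail] at hej
  exact hj ▸ val_mem_onePositions.mpr (by omega)

theorem onePositions_erase_subset_Ico {e : Fin (m + 1) → ℕ} (he : e ∈ invSeq021 (m + 1) i) :
    (onePositions e).erase (i - 1) ⊆ Ico i (izero (lowerTail e)) := by
  obtain ⟨-, havoid, hiz⟩ := mem_invSeq021.mp he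
  intro j hj
  obtain ⟨hji, hj⟩ := mem_erase.mp hj
  obtain ⟨j, -, rfl⟩ := mem_map.mp hj
  have hj1 := val_mem_onePositions.mp hj
  have hij : i ≤ (j : ℕ) + 1 := by
    by_contra! h
    have := eq_zero_of_lt_izero j.succ (e := e) (by simp only [Fin.val_succ]; omega)
    omega
  exact mem_Ico.mpr ⟨by simp only [Fin.valEmbedding_apply] at hji ⊢; omega,
    havoid.lt_izero_lowerTail hj1⟩

theorem card_filter_izero_lowerTail (hi : 1 ≤ i) (hik : i - 1 ≤ k) (hkm : k ≤ m) :
    ((invSeq021 (m + 1) i).filter fun e => izero (lowerTail e) = k).card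
      = 2 ^ (k - i) * (invSeq021 m k).card := by
  rw [mul_comm, ← Nat.card_Ico i k, ← card_powerset, ← card_product]
  symm
  refine card_nbij' (fun p => raiseCons (insert (i - 1) p.2) p.1)
    (fun e => (lowerTail e, (onePositions e).erase (i - 1))) ?_ ?_ ?_ ?_
  · rintro ⟨e, T⟩ h
    simp only [mem_coe, mem_product, mem_powerset] at h
    simp only [mem_coe, mem_filter, lowerTail_raiseCons]
    exact ⟨raiseCons_mem_invSeq021 hi hik hkm h.1 h.2, (mem_invSeq021.mp h.1).2.2⟩
  · intro e h
    simp only [mem_coe, mem_filter] at h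
    simp only [mem_coe, mem_product, mem_powerset]
    obtain ⟨hinv, havoid, -⟩ := mem_invSeq021.mp h.1
    exact ⟨mem_invSeq021.mpr ⟨invSeq_lowerTail hinv, avoid021_lowerTail havoid, h.2⟩,
      h.2 ▸ onePositions_erase_subset_Ico h.1⟩
  · rintro ⟨e, T⟩ h
    simp only [mem_coe, mem_product, mem_powerset] at h
    obtain ⟨-, -, hiz⟩ := mem_invSeq021.mp h.1
    simp only [lowerTail_raiseCons, Prod.mk.injEq, true_and]
    exact erase_onePositions_raiseCons fun j hj => by
      have := mem_Ico.mp (h.2 hj); omega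
  · intro e h
    simp only [mem_coe, mem_filter] at h
    exact raiseCons_lowerTail hi h.1

theorem numInvSeq_succ (hi : 1 ≤ i) (him : i ≤ m + 1) :
    numInvSeq (m + 1) i
      = numInvSeq m (i - 1) + ∑ k ∈ Icc i m, 2 ^ (k - i) * numInvSeq m k := by
  have hmaps : ∀ e ∈ invSeq021 (m + 1) i, izero (lowerTail e) ∈ Icc (i - 1) m := fun e he => by
    have := izero_sub_one_le_izero_lowerTail (e := e)
    rw [(mem_invSeq021.mp he).2.2] at this
    exact mem_Icc.mpr ⟨this, izero_le⟩
  have hIcc : Icc (i - 1) m = insert (i - 1) (Icc i m) := by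
    ext k; simp only [mem_Icc, mem_insert]; omega
  simp only [numInvSeq_eq_card]
  rw [card_eq_sum_card_fiberwise hmaps, hIcc, sum_insert (by simp only [mem_Icc]; omega),
    card_filter_izero_lowerTail hi le_rfl (by omega), tsub_eq_zero_of_le (Nat.sub_le i 1),
    pow_zero, one_mul]
  congr 1
  exact sum_congr rfl fun k hk =>
    card_filter_izero_lowerTail hi (by have := (mem_Icc.mp hk).1; omega) (mem_Icc.mp hk).2

end Counting

/-- recurrence for `I_{n,k}`. -/
theorem invseq_recurrence :
    numInvSeq 1 1 = 1
    ∧ (∀ n : ℕ, 2 ≤ n →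
        numInvSeq n 1 = ∑ k ∈ Finset.Icc 1 (n - 1), 2 ^ (k - 1) * numInvSeq (n - 1) k)
    ∧ (∀ n i : ℕ, 2 ≤ i → i ≤ n →
        numInvSeq n i = numInvSeq (n - 1) (i - 1)
          + ∑ k ∈ Finset.Icc i (n - 1), 2 ^ (k - i) * numInvSeq (n - 1) k) := by
  refine ⟨?_, fun n hn => ?_, fun n i hi hin => ?_⟩
  · simpa [numInvSeq_zero_zero] using numInvSeq_succ (m := 0) le_rfl le_rfl
  · obtain ⟨m, rfl⟩ : ∃ m, n = m + 1 := ⟨n - 1, by omega⟩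
    simpa [numInvSeq_zero_of_pos (show 0 < m by omega)] using
      numInvSeq_succ (m := m) le_rfl (by omega)
  · obtain ⟨m, rfl⟩ : ∃ m, n = m + 1 := ⟨n - 1, by omega⟩
    exact numInvSeq_succ (by omega) hin
end
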